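/- arXiv:2002.10900 — 9 statements merged into one kernel-verified Lean document; each statement's English description precedes it below -/
import Mathlib

section
/- If σ₁ ≈_L σ₂ and e is an expression whose evaluation in σ₁ yields security level L, then e evaluates to the same value and the same level L in σ₂. -/
inductive Level where
  | L : Level
  | H : Level
  deriving DecidableEq, BEq, Repr

def Level.le (a b : Level) : Prop := a = Level.L ∨ b = Level.H

def Level.join : Level → Level → Level
  | Level.L, Level.L => Level.L
  | _, _ => Level.H

abbrev Var := String
abbrev Val := Int

/-- A state maps variable names to pairs (value, security level). -/
def State := Var → Val × Level

/-- Low equivalence: if either state assigns `x` the level L, then the two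
states agree on `x` (both value and level). -/
def lowEquiv (σ₁ σ₂ : State) : Prop :=
  ∀ x : Var, ((σ₁ x).2 = Level.L ∨ (σ₂ x).2 = Level.L) → σ₁ x = σ₂ x

/-- Expressions built from constants and variables. -/
inductive Expr where
  | const : Val → Expr
  | var : Var → Expr
  | plus : Expr → Expr → Expr

/-- Evaluation returns a pair (value, level), where the level is the join of
the levels of all variables occurring in the expression (constants are L). -/
def eval : Expr → State → Val × Level
  | .const v, _ => (v, Level.L)
  | .var x, σ => σ x
  | .plus e₁ e₂, σ =>
      ((eval e₁ σ).1 + (eval e₂ σ).1, Level.join (eval e₁ σ).2 (eval e₂ σ).2)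

/-- If σ₁ ≈_L σ₂ and an expression evaluates in σ₁ with security level L,
then it evaluates to the same value and the same level L in σ₂. -/
theorem eval_low_agree (σ₁ σ₂ : State) (e : Expr)
    (h : lowEquiv σ₁ σ₂) (hL : (eval e σ₁).2 = Level.L) :
    eval e σ₂ = eval e σ₁ := by
  induction e with
  | const v => rfl
  | var x => exact (h x (Or.inl hL)).symm
  | plus e₁ e₂ ih₁ ih₂ =>
    simp only [eval] at hL ⊢
    have h1 : (eval e₁ σ₁).2 = Level.L := by
      cases h1 : (eval e₁ σ₁).2 <;> cases h2 : (eval e₂ σ₁).2 <;>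
        simp [h1, h2, Level.join] at hL <;> rfl
    have h2 : (eval e₂ σ₁).2 = Level.L := by
      cases h1 : (eval e₁ σ₁).2 <;> cases h2 : (eval e₂ σ₁).2 <;>
        simp [h1, h2, Level.join] at hL <;> rfl
    rw [ih₁ h1, ih₂ h2]
end

section
/- The flow-sensitive assignment rule preserves low equivalence: if σ₁ ≈_L σ₂ and pc is the same program counter level, then updating x in σ₁ with (eval(e,σ₁).value, eval(e,σ₁).level ⊔ pc) and updating x in σ₂ with (eval(e,σ₂).value, eval(e,σ₂).level ⊔ pc) yields low equivalent states. -/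
/-- Update variable `x` in state `σ` to the pair `p`. -/
def update (σ : State) (x : Var) (p : Val × Level) : State :=
  fun y => if y = x then p else σ y

lemma join_eq_L {a b : Level} (h : Level.join a b = Level.L) : a = Level.L ∧ b = Level.L := by
  cases a <;> cases b <;> simp_all [Level.join]

lemma eval_lowEquiv (σ₁ σ₂ : State) (h : lowEquiv σ₁ σ₂) (e : Expr)
    (hl : (eval e σ₁).2 = Level.L ∨ (eval e σ₂).2 = Level.L) :
    eval e σ₁ = eval e σ₂ := by
  induction e with
  | const v => rfl
  | var y => exact h y hl
  | plus e₁ e₂ ih₁ ih₂ =>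
    simp only [eval] at hl ⊢
    rcases hl with hl | hl <;>
      obtain ⟨h1, h2⟩ := join_eq_L hl <;>
      rw [ih₁ (by tauto), ih₂ (by tauto)]

/-- The flow-sensitive assignment rule preserves low equivalence:
updating `x` with the evaluated value, tagged with the join of the
expression's level and the program counter level `pc`, in two low
equivalent states yields low equivalent states. -/
theorem assign_preserves_lowEquiv (σ₁ σ₂ : State) (x : Var) (e : Expr) (pc : Level)
    (h : lowEquiv σ₁ σ₂) :
    lowEquiv
      (update σ₁ x ((eval e σ₁).1, Level.join (eval e σ₁).2 pc))
      (update σ₂ x ((eval e σ₂).1, Level.join (eval e σ₂).2 pc)) := by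
  intro y hy
  unfold update at *
  by_cases hyx : y = x
  · simp only [hyx, if_true] at *
    rcases hy with hy | hy <;> obtain ⟨h1, h2⟩ := join_eq_L hy <;>
      rw [eval_lowEquiv σ₁ σ₂ h e (by tauto)]
  · simp only [if_neg hyx] at *
    exact h y hy
end

section
/- If both branches of a conditional are executed under pc = H in two runs and afterwards update_H is applied to all variables assigned in either branch, then starting from low equivalent states the resulting states are low equivalent, regardless of which branch each run takes. -/
open Classical in
/-- `updateH σ W` raises the security level of every variable in `W` to H
without changing values. -/
noncomputable def updateH (σ : State) (W : Set Var) : State :=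
  fun x => if x ∈ W then ((σ x).1, Level.H) else σ x

/-- If both branches of a conditional are executed under pc = H in two runs
(so every assigned variable receives level H and variables outside the write
set are unchanged), and afterwards `updateH` is applied to a set `W`
containing both write sets, then starting from low equivalent states the
resulting states are low equivalent, regardless of which branch each run
takes. -/
theorem high_branch_lowEquiv (σ₁ σ₂ σ₁' σ₂' : State) (W₁ W₂ W : Set Var)
    (hW₁ : W₁ ⊆ W) (hW₂ : W₂ ⊆ W)
    (heq : lowEquiv σ₁ σ₂)
    (hrun₁ : ∀ x : Var, x ∉ W₁ → σ₁' x = σ₁ x)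
    (hhigh₁ : ∀ x ∈ W₁, (σ₁' x).2 = Level.H)
    (hrun₂ : ∀ x : Var, x ∉ W₂ → σ₂' x = σ₂ x)
    (hhigh₂ : ∀ x ∈ W₂, (σ₂' x).2 = Level.H) :
    lowEquiv (updateH σ₁' W) (updateH σ₂' W) := by
  intro x hx
  unfold updateH at *
  by_cases hw : x ∈ W
  · simp [hw] at hx
  · simp [hw] at hx ⊢
    rw [hrun₁ x (fun h => hw (hW₁ h)), hrun₂ x (fun h => hw (hW₂ h))]
    apply heq
    rwa [hrun₁ x (fun h => hw (hW₁ h)), hrun₂ x (fun h => hw (hW₂ h))] at hx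
end

section
/- Each object is low-to-low deterministic: any low-tagged part of the post-state or low output resulting from executing one statement is determined by the low part of the pre-state; formally, if two pre-states are low equivalent and the pc stacks are equal, then executing the same statement produces equal pc stacks, low equivalent post-states, and equal low outputs. -/
/-- Raise the levels of all variables in the list `ws` to H. -/
def updateHL (σ : State) (ws : List Var) : State :=
  fun x => if x ∈ ws then ((σ x).1, Level.H) else σ x

/-- The program-counter level determined by the pc stack: H iff nonempty. -/
def pcOf : List Level → Level
  | [] => Level.L
  | _ :: _ => Level.H

/-- Statements: assignment, conditional, join-point marker (recording the
variables written in the untaken branch), asynchronous call and return. -/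
inductive Stmt where
  | assign : Var → Expr → Stmt
  | ite : Expr → List Stmt → List Stmt → Stmt
  | endif : List Var → Stmt
  | call : Expr → Stmt
  | ret : Expr → Stmt

/-- Variables written (assigned) by a statement list. -/
def writes : List Stmt → List Var
  | [] => []
  | .assign x _ :: rest => x :: writes rest
  | .ite _ s₁ s₂ :: rest => writes s₁ ++ writes s₂ ++ writes rest
  | _ :: rest => writes rest

/-- Outputs (emitted messages) are value/level pairs. -/
abbrev Output := Val × Level

/-- A configuration: remaining statement list, state, and pc stack. -/
structure Config where
  sl : List Stmt
  st : State
  pcs : List Level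

/-- Small-step semantics of the flow-sensitive monitor.
Assignments tag the written variable with the join of the expression's level
and pc; a low-guarded conditional under an empty pc stack takes the branch
determined by the guard; a high-guarded conditional (or nonempty pc stack)
pushes H, executes the taken branch, and installs an `endif` marker carrying
the variables written in the untaken branch; `endif` raises those variables
to H and pops the stack; calls and returns emit a message tagged with the
join of the data level and pc. -/
inductive Step : Config → List Output → Config → Prop where
  | assign {x e sl σ pcs} :
      Step ⟨Stmt.assign x e :: sl, σ, pcs⟩ []
        ⟨sl, update σ x ((eval e σ).1, Level.join (eval e σ).2 (pcOf pcs)), pcs⟩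
  | ifLow {e s₁ s₂ sl σ pcs} :
      (eval e σ).2 = Level.L → pcs = [] →
      Step ⟨Stmt.ite e s₁ s₂ :: sl, σ, pcs⟩ []
        ⟨(if (eval e σ).1 ≠ 0 then s₁ else s₂) ++ sl, σ, pcs⟩
  | ifHigh {e s₁ s₂ sl σ pcs} :
      ((eval e σ).2 = Level.H ∨ pcs ≠ []) →
      Step ⟨Stmt.ite e s₁ s₂ :: sl, σ, pcs⟩ []
        ⟨(if (eval e σ).1 ≠ 0 then s₁ ++ [Stmt.endif (writes s₂)]
          else s₂ ++ [Stmt.endif (writes s₁)]) ++ sl, σ, Level.H :: pcs⟩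
  | endif {ws sl σ pcs} :
      Step ⟨Stmt.endif ws :: sl, σ, pcs⟩ [] ⟨sl, updateHL σ ws, pcs.tail⟩
  | call {e sl σ pcs} :
      Step ⟨Stmt.call e :: sl, σ, pcs⟩
        [((eval e σ).1, Level.join (eval e σ).2 (pcOf pcs))] ⟨sl, σ, pcs⟩
  | ret {e sl σ pcs} :
      Step ⟨Stmt.ret e :: sl, σ, pcs⟩
        [((eval e σ).1, Level.join (eval e σ).2 (pcOf pcs))] ⟨[], σ, pcs⟩

/-- Multi-step execution, accumulating the trace of outputs. -/
inductive Steps : Config → List Output → Config → Prop where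
  | refl (c : Config) : Steps c [] c
  | trans {c₁ α c₂ β c₃} : Step c₁ α c₂ → Steps c₂ β c₃ → Steps c₁ (α ++ β) c₃

/-- The low outputs of a trace: those tagged with level L. -/
def lowOut (α : List Output) : List Output :=
  α.filter (fun o => o.2 == Level.L)

lemma eval_low {σ₁ σ₂ : State} (heq : lowEquiv σ₁ σ₂) (e : Expr)
    (h : (eval e σ₁).2 = Level.L ∨ (eval e σ₂).2 = Level.L) :
    eval e σ₁ = eval e σ₂ := by
  induction e with
  | const v => rfl
  | var x => exact heq x h
  | plus e₁ e₂ ih₁ ih₂ =>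
    simp only [eval] at h ⊢
    rcases h with h | h <;>
      obtain ⟨h1, h2⟩ := join_eq_L h <;>
      rw [ih₁ (by tauto), ih₂ (by tauto)]

lemma update_lowEquiv {σ₁ σ₂ : State} (heq : lowEquiv σ₁ σ₂) (x : Var)
    {p₁ p₂ : Val × Level}
    (hp : p₁.2 = Level.L ∨ p₂.2 = Level.L → p₁ = p₂) :
    lowEquiv (update σ₁ x p₁) (update σ₂ x p₂) := by
  intro y hy
  simp only [update] at *
  by_cases h : y = x <;> simp_all
  exact heq y hy

lemma updateHL_lowEquiv {σ₁ σ₂ : State} (heq : lowEquiv σ₁ σ₂) (ws : List Var) :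
    lowEquiv (updateHL σ₁ ws) (updateHL σ₂ ws) := by
  intro y hy
  simp only [updateHL] at *
  by_cases h : y ∈ ws
  · simp [h] at hy
  · simp [h] at hy ⊢
    exact heq y hy

/-- Single-step low-to-low determinism: executing the same statement from
two low equivalent pre-states with equal pc stacks produces equal pc stacks,
low equivalent post-states, and equal low outputs. -/
theorem low_to_low_determinism (s : Stmt) (sl : List Stmt)
    (σ₁ σ₂ : State) (pcs : List Level) (c₁ c₂ : Config) (α₁ α₂ : List Output)
    (heq : lowEquiv σ₁ σ₂)
    (h₁ : Step ⟨s :: sl, σ₁, pcs⟩ α₁ c₁)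
    (h₂ : Step ⟨s :: sl, σ₂, pcs⟩ α₂ c₂) :
    c₁.pcs = c₂.pcs ∧ lowEquiv c₁.st c₂.st ∧ lowOut α₁ = lowOut α₂ := by
  cases h₁ <;> cases h₂
  case assign.assign x e =>
    refine ⟨rfl, ?_, rfl⟩
    apply update_lowEquiv heq
    intro hp
    have hev : eval e σ₁ = eval e σ₂ := by
      apply eval_low heq
      rcases hp with hp | hp <;> [left; right] <;> exact (join_eq_L hp).1
    rw [hev]
  case ifLow.ifLow e s₁ s₂ h1 h2 h3 h4 =>
    exact ⟨rfl, heq, rfl⟩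
  case ifLow.ifHigh e s₁ s₂ h1 h2 h3 =>
    have := eval_low heq e (Or.inl h1)
    rcases h3 with h3 | h3
    · rw [this] at h1; simp_all
    · exact absurd h2 h3
  case ifHigh.ifLow e s₁ s₂ h3 h1 h2 =>
    have := eval_low heq e (Or.inr h1)
    rcases h3 with h3 | h3
    · rw [this] at h3; simp_all
    · exact absurd h2 h3
  case ifHigh.ifHigh => exact ⟨rfl, heq, rfl⟩
  case endif.endif ws => exact ⟨rfl, updateHL_lowEquiv heq ws, rfl⟩
  case call.call e =>
    refine ⟨rfl, heq, ?_⟩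
    by_cases h : Level.join (eval e σ₁).2 (pcOf pcs) = Level.L
    · have := eval_low heq e (Or.inl (join_eq_L h).1)
      rw [this]
    · by_cases h' : Level.join (eval e σ₂).2 (pcOf pcs) = Level.L
      · have := eval_low heq e (Or.inr (join_eq_L h').1)
        rw [this]
      · have e1 : Level.join (eval e σ₁).2 (pcOf pcs) = Level.H := by
          cases hhh : Level.join (eval e σ₁).2 (pcOf pcs) <;> simp_all
        have e2 : Level.join (eval e σ₂).2 (pcOf pcs) = Level.H := by
          cases hhh : Level.join (eval e σ₂).2 (pcOf pcs) <;> simp_all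
        simp only [lowOut, e1, e2]
        rfl
  case ret.ret e =>
    refine ⟨rfl, heq, ?_⟩
    by_cases h : Level.join (eval e σ₁).2 (pcOf pcs) = Level.L
    · have := eval_low heq e (Or.inl (join_eq_L h).1)
      rw [this]
    · by_cases h' : Level.join (eval e σ₂).2 (pcOf pcs) = Level.L
      · have := eval_low heq e (Or.inr (join_eq_L h').1)
        rw [this]
      · have e1 : Level.join (eval e σ₁).2 (pcOf pcs) = Level.H := by
          cases hhh : Level.join (eval e σ₁).2 (pcOf pcs) <;> simp_all
        have e2 : Level.join (eval e σ₂).2 (pcOf pcs) = Level.H := by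
          cases hhh : Level.join (eval e σ₂).2 (pcOf pcs) <;> simp_all
        simp only [lowOut, e1, e2]
        rfl
end

section
/- No leakage from a wrapped future: in any reachable configuration, a future holding a high value is always enclosed in a wrapper with level H, and a get operation by an object of level L on such a future never yields the future's value (it yields error instead). -/
/-- Result of a get operation: either an error, or the future's value. -/
inductive GetRes where
  | error : GetRes
  | val : Int → GetRes
  deriving DecidableEq

/-- Result delivered by the w-get rule of a wrapper of level `wLev` to an
object of level `objLev` asking for a wrapped future value `d`: per the
paper's rule, if `objLev ⊑ wLev` the object receives error, otherwise the
value. -/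
def getResult (objLev wLev : Level) (d : Int) : GetRes :=
  if objLev = Level.L ∨ wLev = Level.H then GetRes.error else GetRes.val d

/-- Configuration items: unresolved futures, resolved (unwrapped) futures
with value and level, wrapped futures (wrapper level, id, value, value
level), completion messages, and objects with a level and the result of
their last get (if any). -/
inductive Item where
  | futU : Nat → Item
  | fut : Nat → Int → Level → Item
  | wfut : Level → Nat → Int → Level → Item
  | comp : Nat → Int → Level → Item
  | obj : Nat → Level → Option GetRes → Item
  deriving DecidableEq

/-- Transition rules: (w-fut) a completion of level H wraps the resolved
future in a wrapper of level H, one of level L resolves it unwrapped;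
(w-get) a get on a wrapped future returns `getResult`; (fut-get) unwrapped
futures give their value freely. No rule removes a wrapper. -/
inductive Step10 : Multiset Item → Multiset Item → Prop where
  | resolveH {f d C} :
      Step10 (Item.comp f d Level.H ::ₘ Item.futU f ::ₘ C)
             (Item.wfut Level.H f d Level.H ::ₘ C)
  | resolveL {f d C} :
      Step10 (Item.comp f d Level.L ::ₘ Item.futU f ::ₘ C)
             (Item.fut f d Level.L ::ₘ C)
  | getWrapped {o lev w f d dl C} :
      Step10 (Item.obj o lev none ::ₘ Item.wfut w f d dl ::ₘ C)
             (Item.obj o lev (some (getResult lev w d)) ::ₘ Item.wfut w f d dl ::ₘ C)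
  | getUnwrapped {o lev f d dl C} :
      Step10 (Item.obj o lev none ::ₘ Item.fut f d dl ::ₘ C)
             (Item.obj o lev (some (GetRes.val d)) ::ₘ Item.fut f d dl ::ₘ C)

/-- Initial configurations: no resolved high future is unwrapped, and every
wrapped high future sits in a wrapper of level H. -/
def Init10 (C : Multiset Item) : Prop :=
  (∀ f d, Item.fut f d Level.H ∉ C) ∧
  (∀ w f d, Item.wfut w f d Level.H ∈ C → w = Level.H)

inductive Reachable10 : Multiset Item → Prop where
  | init {C} : Init10 C → Reachable10 C
  | step {C C'} : Reachable10 C → Step10 C C' → Reachable10 C'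

/-- No leakage from a wrapped future: in any reachable configuration, a
future holding a value of level H is never unwrapped and is always enclosed
in a wrapper of level H; moreover a get by an object of level L on a wrapped
high future yields error, never the value. -/
theorem no_leak_from_wrapped_future :
    (∀ C, Reachable10 C →
      (∀ f d, Item.fut f d Level.H ∉ C) ∧
      (∀ w f d, Item.wfut w f d Level.H ∈ C → w = Level.H)) ∧
    (∀ d : Int, getResult Level.L Level.H d = GetRes.error) := by
  constructor
  · intro C h
    induction h with
    | init h => exact h
    | step _ hs ih =>
      obtain ⟨ih1, ih2⟩ := ih
      cases hs with
      | @resolveH f d C =>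
        refine ⟨fun f' d' hm => ?_, fun w' f' d' hm => ?_⟩
        · rcases Multiset.mem_cons.1 hm with h | h
          · exact absurd h (by simp)
          · exact ih1 f' d' (by simp [h])
        · rcases Multiset.mem_cons.1 hm with h | h
          · injection h
          · exact ih2 w' f' d' (by simp [h])
      | @resolveL f d C =>
        refine ⟨fun f' d' hm => ?_, fun w' f' d' hm => ?_⟩
        · rcases Multiset.mem_cons.1 hm with h | h
          · injection h with _ _ h3; exact absurd h3 (by simp)
          · exact ih1 f' d' (by simp [h])
        · rcases Multiset.mem_cons.1 hm with h | h
          · injection h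
          · exact ih2 w' f' d' (by simp [h])
      | @getWrapped o lev w f d dl C =>
        refine ⟨fun f' d' hm => ?_, fun w' f' d' hm => ?_⟩
        · rcases Multiset.mem_cons.1 hm with h | h
          · injection h
          · rcases Multiset.mem_cons.1 h with h | h
            · injection h
            · exact ih1 f' d' (by simp [h])
        · rcases Multiset.mem_cons.1 hm with h | h
          · injection h
          · rcases Multiset.mem_cons.1 h with h | h
            · exact ih2 w' f' d' (by simp [← h])
            · exact ih2 w' f' d' (by simp [h])
      | @getUnwrapped o lev f d dl C =>
        refine ⟨fun f' d' hm => ?_, fun w' f' d' hm => ?_⟩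
        · rcases Multiset.mem_cons.1 hm with h | h
          · injection h
          · rcases Multiset.mem_cons.1 h with h | h
            · exact ih1 f' d' (by simp [← h])
            · exact ih1 f' d' (by simp [h])
        · rcases Multiset.mem_cons.1 hm with h | h
          · injection h
          · rcases Multiset.mem_cons.1 h with h | h
            · injection h
            · exact ih2 w' f' d' (by simp [h])
  · intro d; simp [getResult]
end

section
/- No high message reaches a low object: in the wrapper semantics, an invocation message tagged with level H is never delivered to an object of level L; the wrapper either forwards the message when its level is below or equal to the destination's level, or deletes it and resolves the corresponding future to error. -/
/-- Configuration items: `wrapMsg fId dst dstLev lev` is an invocation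
message of level `lev` still inside its source's wrapper, addressed to
object `dst` of level `dstLev`; `msg` is an in-flight (forwarded) message;
`queue o lev entries` is the queue of object `o` of level `lev` holding
pairs (future id, message level); `futU`/`futErr` are unresolved/error
futures. -/
inductive Item11 where
  | wrapMsg : Nat → Nat → Level → Level → Item11
  | msg : Nat → Nat → Level → Level → Item11
  | queue : Nat → Level → List (Nat × Level) → Item11
  | futU : Nat → Item11
  | futErr : Nat → Item11
  deriving DecidableEq

/-- Wrapper semantics: (w-invc forward) if the message level is ⊑ the
destination's level, the wrapper forwards the message; (w-invc block)
otherwise the message is deleted and the corresponding future is resolved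
to error; (invc-q) in-flight messages are delivered to the destination's
queue. -/
inductive Step11 : Multiset Item11 → Multiset Item11 → Prop where
  | forward {f dst dlev lev C} :
      Level.le lev dlev →
      Step11 (Item11.wrapMsg f dst dlev lev ::ₘ C)
             (Item11.msg f dst dlev lev ::ₘ C)
  | block {f dst dlev lev C} :
      ¬ Level.le lev dlev →
      Step11 (Item11.wrapMsg f dst dlev lev ::ₘ Item11.futU f ::ₘ C)
             (Item11.futErr f ::ₘ C)
  | deliver {f dst dlev lev q C} :
      Step11 (Item11.msg f dst dlev lev ::ₘ Item11.queue dst dlev q ::ₘ C)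
             (Item11.queue dst dlev ((f, lev) :: q) ::ₘ C)

/-- Initial configurations: no queue of a level-L object contains a level-H
message, and every already in-flight message respects the destination's
level. -/
def Init11 (C : Multiset Item11) : Prop :=
  (∀ o q, Item11.queue o Level.L q ∈ C → ∀ f, (f, Level.H) ∉ q) ∧
  (∀ f dst dlev lev, Item11.msg f dst dlev lev ∈ C → Level.le lev dlev)

inductive Reachable11 : Multiset Item11 → Prop where
  | init {C} : Init11 C → Reachable11 C
  | step {C C'} : Reachable11 C → Step11 C C' → Reachable11 C'

lemma step_preserves_init {C C'} (h : Step11 C C') (hI : Init11 C) : Init11 C' := by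
  obtain ⟨hq, hm⟩ := hI
  cases h with
  | @forward f dst dlev lev C hle =>
      constructor
      · intro o q hmem g
        rcases Multiset.mem_cons.1 hmem with h | h
        · exact absurd h (by simp)
        · exact hq o q (Multiset.mem_cons_of_mem h) g
      · intro f' dst' dlev' lev' hmem
        rcases Multiset.mem_cons.1 hmem with h | h
        · injection h with h1 h2 h3 h4; subst h3; subst h4; exact hle
        · exact hm f' dst' dlev' lev' (Multiset.mem_cons_of_mem h)
  | @block f dst dlev lev C hle =>
      constructor
      · intro o q hmem g
        rcases Multiset.mem_cons.1 hmem with h | h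
        · exact absurd h (by simp)
        · exact hq o q (Multiset.mem_cons_of_mem (Multiset.mem_cons_of_mem h)) g
      · intro f' dst' dlev' lev' hmem
        rcases Multiset.mem_cons.1 hmem with h | h
        · exact absurd h (by simp)
        · exact hm f' dst' dlev' lev' (Multiset.mem_cons_of_mem (Multiset.mem_cons_of_mem h))
  | @deliver f dst dlev lev q C =>
      constructor
      · intro o q' hmem g
        rcases Multiset.mem_cons.1 hmem with h | h
        · injection h with h1 h2 h3
          subst h1; subst h2; subst h3
          have hle := hm f o Level.L lev (Multiset.mem_cons_self _ _)
          have hlev : lev = Level.L := by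
            rcases hle with h | h
            · exact h
            · exact absurd h (by simp)
          subst hlev
          intro hg
          rcases List.mem_cons.1 hg with h | h
          · exact absurd h (by simp)
          · exact hq o q (Multiset.mem_cons_of_mem (Multiset.mem_cons_self _ _)) g h
        · exact hq o q' (Multiset.mem_cons_of_mem (Multiset.mem_cons_of_mem h)) g
      · intro f' dst' dlev' lev' hmem
        rcases Multiset.mem_cons.1 hmem with h | h
        · exact absurd h (by simp)
        · exact hm f' dst' dlev' lev'
            (Multiset.mem_cons_of_mem (Multiset.mem_cons_of_mem h))

/-- No high message reaches a low object: in every reachable configuration,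
no queue of an object with level L contains an invocation message tagged
with level H. -/
theorem no_high_message_to_low_object :
    ∀ C, Reachable11 C →
      ∀ o q, Item11.queue o Level.L q ∈ C → ∀ f, (f, Level.H) ∉ q := by
  intro C hR
  have : Init11 C := by
    induction hR with
    | init h => exact h
    | step _ hs ih => exact step_preserves_init hs ih
  exact this.1
end

section
/- Global non-interference (abstract formulation): given a family of locally deterministic, low-to-low deterministic components communicating via level-tagged messages such that no H-tagged message is ever delivered to an L-level component, any two global executions consuming equal low equivalent inputs produce, componentwise, equal low outputs. -/
/-- Execute a schedule of (component, optional tagged input) events over a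
global state `g` mapping component identities to local configurations,
using the deterministic local step function; returns the final global state
and the per-event list of (component, emitted tagged outputs). -/
def exec {Id LC Msg : Type} [DecidableEq Id]
    (step : Id → LC → Option (Msg × Level) → LC × List (Msg × Level))
    (g : Id → LC) :
    List (Id × Option (Msg × Level)) → (Id → LC) × List (Id × List (Msg × Level))
  | [] => (g, [])
  | (i, inp) :: rest =>
      let r := step i (g i) inp
      let res := exec step (Function.update g i r.1) rest
      (res.1, (i, r.2) :: res.2)

/-- Global non-interference (abstract formulation): given a family of
locally deterministic components with a step function that is low-to-low
deterministic (low equivalent local configs consuming inputs with equal low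
projections step to low equivalent configs with equal low outputs), such
that no H-tagged message is ever delivered to an L-level component, any two
global executions that schedule components in the same order and consume
inputs with equal low projections keep all components pairwise low
equivalent and produce, componentwise, equal low outputs. -/
theorem global_noninterference {Id LC Msg : Type} [DecidableEq Id]
    (step : Id → LC → Option (Msg × Level) → LC × List (Msg × Level))
    (lowEq : LC → LC → Prop) (hEquiv : Equivalence lowEq)
    (lvl : Id → Level)
    (lowMsg : Option (Msg × Level) → Option Msg)
    (lowOuts : List (Msg × Level) → List Msg)
    (hl2l : ∀ (i : Id) (c₁ c₂ : LC) (in₁ in₂ : Option (Msg × Level)),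
      lowEq c₁ c₂ → lowMsg in₁ = lowMsg in₂ →
      lowEq (step i c₁ in₁).1 (step i c₂ in₂).1 ∧
      lowOuts (step i c₁ in₁).2 = lowOuts (step i c₂ in₂).2)
    (g₁ g₂ : Id → LC) (hg : ∀ i, lowEq (g₁ i) (g₂ i))
    (sched₁ sched₂ : List (Id × Option (Msg × Level)))
    (hids : sched₁.map Prod.fst = sched₂.map Prod.fst)
    (hlowin : sched₁.map (fun p => lowMsg p.2) = sched₂.map (fun p => lowMsg p.2))
    (hnoHL₁ : ∀ p ∈ sched₁, lvl p.1 = Level.L → ∀ m : Msg, p.2 ≠ some (m, Level.H))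
    (hnoHL₂ : ∀ p ∈ sched₂, lvl p.1 = Level.L → ∀ m : Msg, p.2 ≠ some (m, Level.H)) :
    (∀ i, lowEq ((exec step g₁ sched₁).1 i) ((exec step g₂ sched₂).1 i)) ∧
    (exec step g₁ sched₁).2.map (fun p => (p.1, lowOuts p.2)) =
      (exec step g₂ sched₂).2.map (fun p => (p.1, lowOuts p.2)) := by
  induction sched₁ generalizing sched₂ g₁ g₂ with
  | nil =>
    cases sched₂ with
    | nil => exact ⟨hg, rfl⟩
    | cons b t => simp at hids
  | cons a t ih =>
    cases sched₂ with
    | nil => simp at hids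
    | cons b t₂ =>
      obtain ⟨i, inp₁⟩ := a
      obtain ⟨j, inp₂⟩ := b
      simp only [List.map_cons, List.cons.injEq] at hids hlowin
      obtain ⟨rfl, hids⟩ := hids
      obtain ⟨hin, hlowin⟩ := hlowin
      have hstep := hl2l i (g₁ i) (g₂ i) inp₁ inp₂ (hg i) hin
      have hg' : ∀ k, lowEq (Function.update g₁ i (step i (g₁ i) inp₁).1 k)
          (Function.update g₂ i (step i (g₂ i) inp₂).1 k) := by
        intro k
        by_cases hk : k = i
        · subst hk; simpa using hstep.1
        · simp [Function.update_of_ne hk]; exact hg k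
      have IH := ih (Function.update g₁ i (step i (g₁ i) inp₁).1)
        (Function.update g₂ i (step i (g₂ i) inp₂).1) hg' t₂ hids hlowin
        (fun p hp => hnoHL₁ p (List.mem_cons_of_mem _ hp))
        (fun p hp => hnoHL₂ p (List.mem_cons_of_mem _ hp))
      exact ⟨IH.1, by simp [exec, hstep.2, IH.2]⟩
end

section
/- Single write per future: since every asynchronous call creates a future with a fresh identity (generated from the caller identity and a strictly increasing counter), every future identity is written by at most one completion message in any execution. -/
abbrev FutId := Nat × Nat

structure Cfg where
  cnt : Nat → Nat
  created : List FutId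

inductive Step16 : Cfg → Cfg → Prop where
  | call (o : Nat) (c : Cfg) :
      Step16 c ⟨Function.update c.cnt o (c.cnt o + 1), (o, c.cnt o) :: c.created⟩

def Init16 (c : Cfg) : Prop := c.created = []

inductive Reachable16 : Cfg → Prop where
  | init {c} : Init16 c → Reachable16 c
  | step {c c'} : Reachable16 c → Step16 c c' → Reachable16 c'

lemma inv16 : ∀ c, Reachable16 c →
    c.created.Nodup ∧ ∀ p ∈ c.created, p.2 < c.cnt p.1 := by
  intro c h
  induction h with
  | init h => simp [Init16] at h; simp [h]
  | step _ hs ih =>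
    cases hs with
    | call o c =>
      obtain ⟨hnd, hlt⟩ := ih
      constructor
      · refine List.nodup_cons.mpr ⟨fun hmem => ?_, hnd⟩
        have := hlt _ hmem; simp at this
      · rintro ⟨a, b⟩ hp
        rcases List.mem_cons.mp hp with h | h
        · simp at h; simp [h, Function.update]
        · have := hlt _ h
          by_cases ha : a = o <;> simp [Function.update, ha] at this ⊢ <;> omega

/-- Single write per future: since every asynchronous call creates a future
with a fresh identity generated from the caller identity and a strictly
increasing counter, in any reachable configuration the list of created
future identities has no duplicates — hence every future identity is the
target of at most one completion message. -/
theorem future_identities_nodup :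
    ∀ c, Reachable16 c → c.created.Nodup := by
  intro c h; exact (inv16 c h).1
end

section
/- Safe classes need no wrappers: if a class is statically safe (every method call it performs has all actual parameters of declared level L and every return value has declared level L) and the static level analysis is sound (run-time levels are bounded above by declared levels), then every object of that class only emits L-tagged messages, so wrapping it does not change its observable behavior. -/
/-- Safe classes need no wrappers: if every message a class's objects emit
has declared level L (the class is statically safe) and the static level
analysis is sound (the runtime level of every emitted message is bounded by
its declared level), then every emitted message has runtime level L, and
hence the wrapper forwarding condition `runtimeLevel m ⊑ dstLev` holds for
every destination level — the w-invc rule always takes the forwarding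
branch, so wrapping does not change the observable behavior. -/
theorem safe_class_needs_no_wrapper {Msg : Type}
    (emitted : Set Msg)
    (declaredLevel runtimeLevel : Msg → Level)
    (hsound : ∀ m ∈ emitted, Level.le (runtimeLevel m) (declaredLevel m))
    (hsafe : ∀ m ∈ emitted, declaredLevel m = Level.L) :
    ∀ m ∈ emitted, runtimeLevel m = Level.L ∧
      ∀ dstLev : Level, Level.le (runtimeLevel m) dstLev := by
  intro m hm
  have h1 := hsound m hm
  have h2 := hsafe m hm
  rcases h1 with h | h
  · exact ⟨h, fun _ => Or.inl h⟩
  · rw [h2] at h; cases h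
end
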